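/- For every continuously differentiable function u : [0,1] → ℝ with u'(0) = 0 and u(1) = 0 (or merely u(1) = 0), the Poincaré inequality ∫_0^1 u(x)² dx ≤ (4/π²) ∫_0^1 u'(x)² dx holds. -/

import Mathlib

/-! If `φ' = k + φ²` on `[a, b]`, then `-(φ u²)' = u'² - k u² - (u' + φ u)²`, so integrating gives
`k ∫ u² ≤ ∫ u'²` as soon as the boundary term `[φ u²]ₐᵇ` is nonpositive (Picone's identity).
For `|c| < π/2` the function `φ x = c tan (c x)` solves this Riccati equation with `k = c²` on `[0, 1]`
and vanishes at `0`, while `u 1 = 0`; hence `c² ∫ u² ≤ ∫ u'²`, and `c → π/2` gives the constant `π²/4`. -/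

open Set intervalIntegral Filter Topology Real

section Riccati

variable {u u' φ : ℝ → ℝ} {a b k : ℝ}

lemma hasDerivAt_neg_mul_sq_of_riccati {x : ℝ} (hu : HasDerivAt u (u' x) x)
    (hφ : HasDerivAt φ (k + φ x ^ 2) x) :
    HasDerivAt (fun y => -(φ y * u y ^ 2))
      (u' x ^ 2 - k * u x ^ 2 - (u' x + φ x * u x) ^ 2) x := by
  refine (hφ.mul (hu.fun_pow 2)).neg.congr_deriv ?_
  simp only [Nat.cast_ofNat, Nat.add_one_sub_one, pow_one]
  ring

theorem integral_deriv_sq_sub_eq_of_riccati (hab : a ≤ b)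
    (hu : ∀ x ∈ Icc a b, HasDerivWithinAt u (u' x) (Icc a b) x)
    (hu' : ContinuousOn u' (Icc a b))
    (hφ : ∀ x ∈ Icc a b, HasDerivWithinAt φ (k + φ x ^ 2) (Icc a b) x) :
    ∫ x in a..b, (u' x ^ 2 - k * u x ^ 2) =
      φ a * u a ^ 2 - φ b * u b ^ 2 + ∫ x in a..b, (u' x + φ x * u x) ^ 2 := by
  have hu_cont : ContinuousOn u (Icc a b) := fun x hx => (hu x hx).continuousWithinAt
  have hφ_cont : ContinuousOn φ (Icc a b) := fun x hx => (hφ x hx).continuousWithinAt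
  have hint_main : IntervalIntegrable (fun x => u' x ^ 2 - k * u x ^ 2) MeasureTheory.volume a b :=
    ((hu'.pow 2).sub ((hu_cont.pow 2).const_smul k)).intervalIntegrable_of_Icc hab
  have hint_sq : IntervalIntegrable (fun x => (u' x + φ x * u x) ^ 2) MeasureTheory.volume a b :=
    ((hu'.add (hφ_cont.mul hu_cont)).pow 2).intervalIntegrable_of_Icc hab
  have hftc := integral_eq_sub_of_hasDerivAt_of_le (f := fun x => -(φ x * u x ^ 2)) hab
    (hφ_cont.mul (hu_cont.pow 2)).neg
    (fun x hx => hasDerivAt_neg_mul_sq_of_riccati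
      ((hu x (Ioo_subset_Icc_self hx)).hasDerivAt (Icc_mem_nhds hx.1 hx.2))
      ((hφ x (Ioo_subset_Icc_self hx)).hasDerivAt (Icc_mem_nhds hx.1 hx.2)))
    (hint_main.sub hint_sq)
  rw [integral_sub hint_main hint_sq] at hftc
  linarith

theorem mul_integral_sq_le_integral_deriv_sq_of_riccati (hab : a ≤ b)
    (hu : ∀ x ∈ Icc a b, HasDerivWithinAt u (u' x) (Icc a b) x)
    (hu' : ContinuousOn u' (Icc a b))
    (hφ : ∀ x ∈ Icc a b, HasDerivWithinAt φ (k + φ x ^ 2) (Icc a b) x)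
    (hbd : φ b * u b ^ 2 ≤ φ a * u a ^ 2) :
    k * ∫ x in a..b, u x ^ 2 ≤ ∫ x in a..b, u' x ^ 2 := by
  have hu_cont : ContinuousOn u (Icc a b) := fun x hx => (hu x hx).continuousWithinAt
  have hint_u' : IntervalIntegrable (fun x => u' x ^ 2) MeasureTheory.volume a b :=
    (hu'.pow 2).intervalIntegrable_of_Icc hab
  have hint_u : IntervalIntegrable (fun x => u x ^ 2) MeasureTheory.volume a b :=
    (hu_cont.pow 2).intervalIntegrable_of_Icc hab
  have hidentity := integral_deriv_sq_sub_eq_of_riccati hab hu hu' hφ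
  rw [integral_sub hint_u' (hint_u.const_mul k), integral_const_mul] at hidentity
  have hsq_nonneg : 0 ≤ ∫ x in a..b, (u' x + φ x * u x) ^ 2 :=
    integral_nonneg hab fun x _ => sq_nonneg _
  linarith

end Riccati

lemma hasDerivAt_const_mul_tan_const_mul {c x : ℝ} (hx : cos (c * x) ≠ 0) :
    HasDerivAt (fun y => c * tan (c * y)) (c ^ 2 + (c * tan (c * x)) ^ 2) x := by
  refine (((hasDerivAt_tan hx).comp x ((hasDerivAt_id x).const_mul c)).const_mul c).congr_deriv ?_
  rw [tan_eq_sin_div_cos]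
  field_simp
  rw [cos_sq_add_sin_sq, mul_one]

theorem sq_mul_integral_sq_le_integral_deriv_sq {u u' : ℝ → ℝ}
    (hu : ∀ x ∈ Icc (0:ℝ) 1, HasDerivWithinAt u (u' x) (Icc (0:ℝ) 1) x)
    (hu' : ContinuousOn u' (Icc (0:ℝ) 1)) (hu1 : u 1 = 0) {c : ℝ} (hc : |c| < π / 2) :
    c ^ 2 * ∫ x in (0:ℝ)..1, u x ^ 2 ≤ ∫ x in (0:ℝ)..1, u' x ^ 2 := by
  refine mul_integral_sq_le_integral_deriv_sq_of_riccati zero_le_one hu hu'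
    (φ := fun y => c * tan (c * y)) (fun x hx => ?_) (by simp [hu1])
  have hcx : |c * x| < π / 2 := by
    rw [abs_mul, abs_of_nonneg hx.1]
    exact (mul_le_of_le_one_right (abs_nonneg c) hx.2).trans_lt hc
  have hcos : cos (c * x) ≠ 0 := (cos_pos_of_mem_Ioo (abs_lt.1 hcx)).ne'
  exact (hasDerivAt_const_mul_tan_const_mul hcos).hasDerivWithinAt

theorem poincare_mixed_neumann_dirichlet
    (u u' : ℝ → ℝ)
    (hu_deriv : ∀ x ∈ Icc (0:ℝ) 1, HasDerivWithinAt u (u' x) (Icc (0:ℝ) 1) x)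
    (hu'_cont : ContinuousOn u' (Icc (0:ℝ) 1))
    (hu1 : u 1 = 0) :
    (∫ x in (0:ℝ)..1, u x ^ 2) ≤ (4 / Real.pi ^ 2) * ∫ x in (0:ℝ)..1, u' x ^ 2 := by
  set B := ∫ x in (0:ℝ)..1, u x ^ 2
  have hpi : 0 < π / 2 := by positivity
  have hlim : Tendsto (fun c : ℝ => c ^ 2 * B) (𝓝[<] (π / 2)) (𝓝 ((π / 2) ^ 2 * B)) :=
    ((continuous_pow 2).mul continuous_const).continuousWithinAt.tendsto
  have hbound : ∀ᶠ c in 𝓝[<] (π / 2), c ^ 2 * B ≤ ∫ x in (0:ℝ)..1, u' x ^ 2 := by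
    filter_upwards [Ioo_mem_nhdsLT hpi] with c hc
    exact sq_mul_integral_sq_le_integral_deriv_sq hu_deriv hu'_cont hu1
      (abs_lt.2 ⟨by linarith [hc.1], hc.2⟩)
  have hpoincare := le_of_tendsto hlim hbound
  rw [div_mul_eq_mul_div, le_div_iff₀ (by positivity)]
  linarith
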